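/- arXiv:1810.05381 — 2 statements merged into one kernel-verified Lean document; each statement's English description precedes it below -/
import Mathlib

section
/- Let P ∈ B(H) be a bounded idempotent. Then the operator P + P* + 2(I − P_{R(P)}) is unitarily equivalent to the operator 2I − P − P* + 2(I − P_{R(I−P)}), where P_{R(P)} and P_{R(I−P)} are the orthogonal projections onto the (closed) ranges of P and of I − P, respectively. -/
open ContinuousLinearMap

variable {H : Type*} [NormedAddCommGroup H] [InnerProductSpace ℂ H] [CompleteSpace H]

/-- The orthogonal projection onto a closed subspace `M`, as an operator on `H`. -/
noncomputable def oproj (M : Submodule ℂ H) (hM : IsClosed (M : Set H)) : H →L[ℂ] H :=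
  haveI : CompleteSpace M := hM.completeSpace_coe
  M.subtypeL ∘L M.orthogonalProjectionOnto

/-- The orthogonal projection onto the closure of the range of an operator. -/
noncomputable def rangeProj (A : H →L[ℂ] H) : H →L[ℂ] H :=
  oproj (LinearMap.range (A : H →ₗ[ℂ] H)).topologicalClosure (Submodule.isClosed_topologicalClosure _)

/-- The orthogonal projection onto the kernel of an operator. -/
noncomputable def kerProj (A : H →L[ℂ] H) : H →L[ℂ] H :=
  oproj (LinearMap.ker (A : H →ₗ[ℂ] H)) (ContinuousLinearMap.isClosed_ker A)

theorem range_idem_eq_ker (P : H →L[ℂ] H) (hP : P * P = P) :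
    LinearMap.range (P : H →ₗ[ℂ] H) = LinearMap.ker ((1 - P : H →L[ℂ] H) : H →ₗ[ℂ] H) := by
  ext x
  constructor
  · rintro ⟨y, rfl⟩
    have h : P (P y) = P y := by
      have := congrArg (fun T : H →L[ℂ] H => T y) hP
      simpa using this
    simp [LinearMap.mem_ker, h]
  · intro hx
    have h : x - P x = 0 := by simpa using hx
    exact ⟨x, (sub_eq_zero.mp h).symm⟩

/-- The range of a bounded idempotent is closed. -/
theorem isClosed_range_idem (P : H →L[ℂ] H) (hP : P * P = P) :
    IsClosed ((LinearMap.range (P : H →ₗ[ℂ] H) : Submodule ℂ H) : Set H) := by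
  rw [range_idem_eq_ker P hP]
  exact ContinuousLinearMap.isClosed_ker _

theorem mul_one_sub_idem (P : H →L[ℂ] H) (hP : P * P = P) :
    (1 - P) * (1 - P) = 1 - P := by
  rw [sub_mul, mul_sub, mul_sub, one_mul, mul_one, hP]
  abel

/-!
Put `S = P + P* - 1` and `T = P - P*`. Then `S* = S`, `T* = -T`, `TS = -ST` and
`S² = 1 + TT*`, so `S` is invertible. The orthogonal projections `E` onto `R(P)` and `F` onto
`R(1 - P)` satisfy `ES = P` and `FS = P - 1`, which turns the two operators `X` and `Y` of the
theorem into `XS = 2S - T - T²` and `YS = 2S + T² - T`. Hence `(1 - T)X = Y(1 - T)`, and since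
`|1 - T|² = S²` commutes with `X`, the unitary part `U = (1 - T)|1 - T|⁻¹` of the invertible
operator `1 - T` satisfies `UX = YU`.
-/

section StarRing

variable {R : Type*} [Ring R] [StarRing R] {p : R}

theorem add_star_sub_one_mul_self_of_isIdempotentElem (hp : IsIdempotentElem p) :
    (p + star p - 1) * (p + star p - 1) = 1 - (p - star p) * (p - star p) := by
  have hp' : star p * star p = star p := hp.star.eq
  simp only [mul_add, add_mul, mul_sub, sub_mul, mul_one, one_mul, hp.eq, hp']
  abel

theorem sub_star_mul_add_star_sub_one_of_isIdempotentElem (hp : IsIdempotentElem p) :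
    (p - star p) * (p + star p - 1) = -((p + star p - 1) * (p - star p)) := by
  have hp' : star p * star p = star p := hp.star.eq
  simp only [mul_add, add_mul, mul_sub, sub_mul, mul_one, one_mul, hp.eq, hp']
  abel

theorem IsSelfAdjoint.mul_add_star_sub_one_eq {e : R} (he : IsSelfAdjoint e)
    (hep : e * p = p) (hpe : p * e = e) : e * (p + star p - 1) = p := by
  have h : e * star p = e := by rw [← he.star_eq, ← star_mul, hpe]
  rw [mul_sub, mul_add, hep, h, mul_one, add_sub_cancel_right]

end StarRing

theorem Commute.of_mul_right_of_isUnit {M : Type*} [Monoid M] {c x s : M}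
    (h : Commute c (x * s)) (hc : Commute c s) (hs : IsUnit s) : Commute c x := by
  obtain ⟨v, rfl⟩ := hs
  simpa using h.mul_right hc.units_inv_right

section Ring

variable {R : Type*} [Ring R] {s t : R}

theorem commute_mul_self_of_mul_eq_neg (hts : t * s = -(s * t)) : Commute (s * s) t := by
  show s * s * t = t * (s * s)
  rw [mul_assoc, ← neg_neg (s * t), ← hts, mul_neg, ← mul_assoc, ← neg_mul, ← hts,
    mul_assoc]

theorem one_sub_mul_eq_mul_one_sub_of_anticommute {x y : R} (hs : IsUnit s)
    (hts : t * s = -(s * t)) (hx : x * s = 2 • s - t - t * t) (hy : y * s = 2 • s + t * t - t) :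
    (1 - t) * x = y * (1 - t) := by
  have hts' : (1 - t) * s = s * (1 + t) := by
    rw [sub_mul, one_mul, hts, mul_add, mul_one, sub_neg_eq_add]
  have hkey : (1 - t) * (2 • s - t - t * t) - (2 • s + t * t - t) * (1 + t)
      = -2 • (t * s + s * t) := by noncomm_ring
  rw [hts, neg_add_cancel, smul_zero, sub_eq_zero] at hkey
  refine hs.mul_left_inj.mp ?_
  rw [mul_assoc, hx, hkey, ← hy, mul_assoc, mul_assoc, hts']

theorem commute_mul_self_of_anticommute {x : R} (hs : IsUnit s) (hts : t * s = -(s * t))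
    (hx : x * s = 2 • s - t - t * t) : Commute (s * s) x := by
  have hst := commute_mul_self_of_mul_eq_neg hts
  have hss : Commute (s * s) s := (Commute.refl s).mul_left (Commute.refl s)
  refine Commute.of_mul_right_of_isUnit ?_ hss hs
  rw [hx]
  exact ((hss.smul_right 2).sub_right hst).sub_right (hst.mul_right hst)

end Ring

theorem starProjection_range_mul_add_star_sub_one {𝕜 E : Type*} [RCLike 𝕜]
    [NormedAddCommGroup E] [InnerProductSpace 𝕜 E] [CompleteSpace E] {P : E →L[𝕜] E}
    (hP : IsIdempotentElem P) [(LinearMap.range (P : E →ₗ[𝕜] E)).HasOrthogonalProjection] :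
    (LinearMap.range (P : E →ₗ[𝕜] E)).starProjection * (P + star P - 1) = P := by
  refine (isSelfAdjoint_starProjection _).mul_add_star_sub_one_eq ?_ ?_ <;> ext x
  · exact Submodule.starProjection_eq_self_iff.mpr (LinearMap.mem_range_self _ x)
  · exact (LinearMap.IsIdempotentElem.mem_range_iff hP.toLinearMap).mp
      (Submodule.starProjection_apply_mem _ x)

section CStarAlgebra

variable {A : Type*} [CStarAlgebra A] [PartialOrder A] [StarOrderedRing A]

theorem isUnit_add_star_sub_one_of_isIdempotentElem {p : A} (hp : IsIdempotentElem p) :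
    IsUnit (p + star p - 1) := by
  have hsq : (p + star p - 1) * (p + star p - 1) = 1 + (p - star p) * star (p - star p) := by
    rw [add_star_sub_one_mul_self_of_isIdempotentElem hp, star_sub, star_star]
    noncomm_ring
  have hpos := isStrictlyPositive_one.add_nonneg (mul_star_self_nonneg (p - star p))
  exact ((Commute.refl _).isUnit_mul_iff.mp (hsq ▸ hpos.isUnit)).1

theorem exists_mem_unitary_eq_star_mul_mul_of_mul_eq_mul {a x y : A} (ha : IsUnit a)
    (hxy : a * x = y * a) (hx : Commute (star a * a) x) :
    ∃ u ∈ unitary A, x = star u * y * u := by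
  have hsq : CFC.abs a * CFC.abs a = star a * a := CFC.abs_mul_abs a
  obtain ⟨r, hr⟩ : IsUnit (CFC.abs a) :=
    ((Commute.refl _).isUnit_mul_iff.mp (hsq ▸ ha.star.mul ha)).1
  have hr_star : star (↑r⁻¹ : A) = ↑r⁻¹ := by
    rw [← Units.coe_star_inv]
    congr
    ext
    rw [Units.coe_star, hr, (CFC.abs_nonneg a).isSelfAdjoint.star_eq]
  have hrx : Commute (↑r⁻¹ : A) x :=
    Commute.units_inv_left (hr ▸ hx.cfcₙ_nnreal NNReal.sqrt)
  have hstar_mul : star (a * ↑r⁻¹) * (a * ↑r⁻¹) = 1 := by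
    rw [star_mul, hr_star, mul_assoc, ← mul_assoc (star a), ← hsq, ← hr]
    simp
  refine ⟨a * ↑r⁻¹, (ha.mul r⁻¹.isUnit).mem_unitary_of_star_mul_self hstar_mul, ?_⟩
  calc x = star (a * ↑r⁻¹) * (a * ↑r⁻¹) * x := by rw [hstar_mul, one_mul]
    _ = star (a * ↑r⁻¹) * (a * x * ↑r⁻¹) := by
        rw [mul_assoc, mul_assoc, hrx.eq, mul_assoc]
    _ = star (a * ↑r⁻¹) * y * (a * ↑r⁻¹) := by rw [hxy]; simp only [mul_assoc]

theorem exists_mem_unitary_eq_star_mul_mul_of_isIdempotentElem {p e f : A}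
    (hp : IsIdempotentElem p)
    (he : e * (p + star p - 1) = p) (hf : f * ((1 - p) + star (1 - p) - 1) = 1 - p) :
    ∃ u ∈ unitary A,
      p + star p + 2 • (1 - e) = star u * (2 - p - star p + 2 • (1 - f)) * u := by
  have hs : IsUnit (p + star p - 1) := isUnit_add_star_sub_one_of_isIdempotentElem hp
  have hts := sub_star_mul_add_star_sub_one_of_isIdempotentElem hp
  have hss := add_star_sub_one_mul_self_of_isIdempotentElem hp
  have hf' : f * (p + star p - 1) = p - 1 := by
    rw [← neg_neg (p - 1), neg_sub, ← hf, ← mul_neg, star_sub, star_one]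
    congr 1
    abel
  set s := p + star p - 1 with hs_def
  set t := p - star p with ht_def
  have hp' : star p * star p = star p := hp.star.eq
  have hX : (p + star p + 2 • (1 - e)) * s = 2 • s - t - t * t := by
    rw [add_mul, smul_mul_assoc, sub_mul, one_mul, he, hs_def, ht_def]
    simp only [mul_add, add_mul, mul_sub, sub_mul, mul_one, hp.eq, hp']
    abel
  have hY : (2 - p - star p + 2 • (1 - f)) * s = 2 • s + t * t - t := by
    rw [add_mul, smul_mul_assoc, sub_mul, sub_mul, sub_mul, one_mul, hf', two_mul, hs_def, ht_def]
    simp only [mul_add, mul_sub, sub_mul, mul_one, hp.eq, hp']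
    abel
  have hstar : star (1 - t) = 1 + t := by
    rw [star_sub, star_one, ht_def, star_sub, star_star]
    abel
  have hnorm : star (1 - t) * (1 - t) = s * s := by
    rw [hstar, hss]
    noncomm_ring
  have hcomm : Commute (star (1 - t)) (1 - t) := by
    rw [hstar]
    exact (Commute.one_left _).add_left ((Commute.one_right t).sub_right (Commute.refl t))
  refine exists_mem_unitary_eq_star_mul_mul_of_mul_eq_mul
    (hcomm.isUnit_mul_iff.mp (hnorm ▸ hs.mul hs)).2
    (one_sub_mul_eq_mul_one_sub_of_anticommute hs hts hX hY) ?_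
  rw [hnorm]
  exact commute_mul_self_of_anticommute hs hts hX

end CStarAlgebra

/-- `P + P* + 2(I − P_{R(P)})` is unitarily equivalent to
`2I − P − P* + 2(I − P_{R(I−P)})`. -/
theorem unitarily_equiv_sum_proj (P : H →L[ℂ] H) (hP : P * P = P) :
    ∃ U ∈ unitary (H →L[ℂ] H),
      P + adjoint P + 2 • (1 - oproj (LinearMap.range (P : H →ₗ[ℂ] H)) (isClosed_range_idem P hP)) =
        adjoint U *
          (2 - P - adjoint P +
            2 • (1 - oproj (LinearMap.range ((1 - P : H →L[ℂ] H) : H →ₗ[ℂ] H))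
                  (isClosed_range_idem (1 - P) (mul_one_sub_idem P hP)))) * U := by
  have := (isClosed_range_idem P hP).completeSpace_coe
  have := (isClosed_range_idem (1 - P) (mul_one_sub_idem P hP)).completeSpace_coe
  have hP' : IsIdempotentElem P := hP
  simp only [← star_eq_adjoint]
  exact exists_mem_unitary_eq_star_mul_mul_of_isIdempotentElem hP'
    (starProjection_range_mul_add_star_sub_one hP')
    (starProjection_range_mul_add_star_sub_one hP'.one_sub)
end

section
/- Let P ∈ B(H) be a bounded idempotent. Then P_{N(2I−P−P*)} = P_{N(P−P*)} − P_{N(P+P*)}; that is, the kernel of P + P* is contained in the kernel of P − P*, and the kernel of 2I − P − P* is the orthogonal complement of N(P+P*) inside N(P−P*). -/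
open ContinuousLinearMap

variable {H : Type*} [NormedAddCommGroup H] [InnerProductSpace ℂ H] [CompleteSpace H]

/-!
If `P` is idempotent and `Px + P*x = 0`, then `P*` fixes `Px`, so
`⟪x, Px⟫ = ⟪Px, Px⟫`, while `⟪x, Px⟫ = ⟪x, P(Px)⟫ = ⟪P*x, Px⟫ = -⟪Px, Px⟫`; hence `Px = 0`.
Thus `N(P+P*) = N(P) ∩ N(P*)`, and applied to `I - P` this gives that `N(2I-P-P*)` is the set of
common fixed points of `P` and `P*`. These two subspaces are orthogonal, and every `w` with
`Pw = P*w` splits as `(w - Pw) + Pw` along them, so `N(P-P*)` is their orthogonal sum; the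
projection identity follows.
-/

open scoped InnerProductSpace

namespace Submodule

variable {𝕜 E : Type*} [RCLike 𝕜] [NormedAddCommGroup E] [InnerProductSpace 𝕜 E]
  {U V K : Submodule 𝕜 E}

theorem IsOrtho.sup_inf_orthogonal (h : U ⟂ V) : (U ⊔ V) ⊓ Uᗮ = V := by
  rw [sup_comm, sup_inf_assoc_of_le U h.symm, inf_orthogonal_eq_bot, sup_bot_eq]

theorem IsOrtho.starProjection_eq_add [U.HasOrthogonalProjection] [V.HasOrthogonalProjection]
    [K.HasOrthogonalProjection] (h : U ⟂ V) (hK : U ⊔ V = K) :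
    K.starProjection = U.starProjection + V.starProjection := by
  subst hK
  ext x
  rw [add_apply]
  refine eq_starProjection_of_mem_of_inner_eq_zero
    (add_mem (mem_sup_left (starProjection_apply_mem U x))
      (mem_sup_right (starProjection_apply_mem V x))) ?_
  rintro _ hw
  obtain ⟨u, hu, v, hv, rfl⟩ := mem_sup.mp hw
  have hVu : ⟪V.starProjection x, u⟫_𝕜 = 0 :=
    inner_left_of_mem_orthogonal hu (h.symm (starProjection_apply_mem V x))
  have hUv : ⟪U.starProjection x, v⟫_𝕜 = 0 :=
    inner_left_of_mem_orthogonal hv (h (starProjection_apply_mem U x))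
  have hxu : ⟪x - (U.starProjection x + V.starProjection x), u⟫_𝕜 = 0 := by
    rw [← sub_sub, inner_sub_left, starProjection_inner_eq_zero x u hu, hVu, sub_zero]
  have hxv : ⟪x - (U.starProjection x + V.starProjection x), v⟫_𝕜 = 0 := by
    rw [add_comm, ← sub_sub, inner_sub_left, starProjection_inner_eq_zero x v hv, hUv, sub_zero]
  rw [inner_add_right, hxu, hxv, add_zero]

end Submodule

namespace ContinuousLinearMap

variable {𝕜 E : Type*} [RCLike 𝕜] [NormedAddCommGroup E] [InnerProductSpace 𝕜 E]
  [CompleteSpace E] {P : E →L[𝕜] E}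

theorem apply_eq_zero_of_add_adjoint_apply_eq_zero (hP : IsIdempotentElem P) {x : E}
    (hx : P x + adjoint P x = 0) : P x = 0 := by
  have hPx : P x = -adjoint P x := eq_neg_of_add_eq_zero_left hx
  have hPP : P (P x) = P x := DFunLike.congr_fun hP.eq x
  have hP'P' : adjoint P (adjoint P x) = adjoint P x :=
    DFunLike.congr_fun (star_eq_adjoint P ▸ hP.star).eq x
  have hfix : adjoint P (P x) = P x := by
    rw [hPx, map_neg, hP'P']
  have h₁ : ⟪x, P x⟫_𝕜 = ⟪P x, P x⟫_𝕜 := by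
    rw [← adjoint_inner_right, hfix]
  have h₂ : ⟪x, P x⟫_𝕜 = -⟪P x, P x⟫_𝕜 := by
    calc ⟪x, P x⟫_𝕜 = ⟪x, P (P x)⟫_𝕜 := by rw [hPP]
      _ = -⟪P x, P x⟫_𝕜 := by rw [← adjoint_inner_left, hPx, inner_neg_left, neg_neg]
  exact inner_self_eq_zero.mp (self_eq_neg.mp (h₁.symm.trans h₂))

theorem ker_add_adjoint (hP : IsIdempotentElem P) :
    LinearMap.ker ((P + adjoint P : E →L[𝕜] E) : E →ₗ[𝕜] E) =
      LinearMap.ker (P : E →ₗ[𝕜] E) ⊓ LinearMap.ker (adjoint P : E →ₗ[𝕜] E) := by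
  ext x
  simp only [Submodule.mem_inf, LinearMap.mem_ker, coe_coe, add_apply]
  refine ⟨fun hx ↦ ?_, fun ⟨h₁, h₂⟩ ↦ by rw [h₁, h₂, add_zero]⟩
  have hPx := apply_eq_zero_of_add_adjoint_apply_eq_zero hP hx
  exact ⟨hPx, by rwa [hPx, zero_add] at hx⟩

theorem ker_two_sub_sub_adjoint (hP : IsIdempotentElem P) :
    LinearMap.ker ((2 - P - adjoint P : E →L[𝕜] E) : E →ₗ[𝕜] E) =
      LinearMap.ker ((1 - P : E →L[𝕜] E) : E →ₗ[𝕜] E) ⊓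
        LinearMap.ker ((1 - adjoint P : E →L[𝕜] E) : E →ₗ[𝕜] E) := by
  have hadj : adjoint (1 - P) = 1 - adjoint P := by
    rw [← star_eq_adjoint, ← star_eq_adjoint, star_sub, star_one]
  have h : (2 : E →L[𝕜] E) - P - adjoint P = (1 - P) + adjoint (1 - P) := by
    rw [hadj, ← one_add_one_eq_two]; abel
  rw [h, ker_add_adjoint hP.one_sub, hadj]

theorem isOrtho_ker_add_adjoint_ker_two_sub_sub_adjoint (hP : IsIdempotentElem P) :
    LinearMap.ker ((P + adjoint P : E →L[𝕜] E) : E →ₗ[𝕜] E) ⟂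
      LinearMap.ker ((2 - P - adjoint P : E →L[𝕜] E) : E →ₗ[𝕜] E) := by
  rw [ker_add_adjoint hP, ker_two_sub_sub_adjoint hP]
  rintro y ⟨-, hy⟩ z ⟨hz, -⟩
  simp only [SetLike.mem_coe, LinearMap.mem_ker, coe_coe, sub_apply, one_apply_eq_self,
    sub_eq_zero] at hy hz
  rw [hz, ← adjoint_inner_right, hy, inner_zero_right]

theorem ker_sub_adjoint (hP : IsIdempotentElem P) :
    LinearMap.ker ((P - adjoint P : E →L[𝕜] E) : E →ₗ[𝕜] E) =
      LinearMap.ker ((P + adjoint P : E →L[𝕜] E) : E →ₗ[𝕜] E) ⊔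
        LinearMap.ker ((2 - P - adjoint P : E →L[𝕜] E) : E →ₗ[𝕜] E) := by
  have hPP (y : E) : P (P y) = P y := DFunLike.congr_fun hP.eq y
  have hP'P' (y : E) : adjoint P (adjoint P y) = adjoint P y :=
    DFunLike.congr_fun (star_eq_adjoint P ▸ hP.star).eq y
  rw [ker_add_adjoint hP, ker_two_sub_sub_adjoint hP]
  apply le_antisymm
  · intro w hw
    simp only [LinearMap.mem_ker, coe_coe, sub_apply, sub_eq_zero] at hw
    refine Submodule.mem_sup.mpr ⟨w - P w, ⟨?_, ?_⟩, P w, ⟨?_, ?_⟩, sub_add_cancel w (P w)⟩ <;>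
      simp only [SetLike.mem_coe, LinearMap.mem_ker, coe_coe, sub_apply, one_apply_eq_self,
        map_sub, sub_eq_zero]
    · exact (hPP w).symm
    · rw [hw, hP'P']
    · exact (hPP w).symm
    · rw [hw, hP'P']
  · rw [sup_le_iff]
    constructor <;> rintro x ⟨h₁, h₂⟩ <;>
      simp only [SetLike.mem_coe, LinearMap.mem_ker, coe_coe, sub_apply, one_apply_eq_self,
        sub_eq_zero] at h₁ h₂ ⊢
    · rw [h₁, h₂]
    · rw [← h₁, ← h₂]

end ContinuousLinearMap

theorem kerProj_eq_starProjection (A : H →L[ℂ] H) :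
    kerProj A = (LinearMap.ker (A : H →ₗ[ℂ] H)).starProjection :=
  rfl

/-- `N(P+P*) ⊆ N(P−P*)`, `N(2I−P−P*)` is the orthogonal complement of `N(P+P*)`
inside `N(P−P*)`, and `P_{N(2I−P−P*)} = P_{N(P−P*)} − P_{N(P+P*)}`. -/
theorem kerProj_two_sub (P : H →L[ℂ] H) (hP : P * P = P) :
    LinearMap.ker ((P + adjoint P : H →L[ℂ] H) : H →ₗ[ℂ] H) ≤ LinearMap.ker ((P - adjoint P : H →L[ℂ] H) : H →ₗ[ℂ] H) ∧
    LinearMap.ker ((2 - P - adjoint P : H →L[ℂ] H) : H →ₗ[ℂ] H) =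
      LinearMap.ker ((P - adjoint P : H →L[ℂ] H) : H →ₗ[ℂ] H) ⊓ (LinearMap.ker ((P + adjoint P : H →L[ℂ] H) : H →ₗ[ℂ] H))ᗮ ∧
    kerProj (2 - P - adjoint P) = kerProj (P - adjoint P) - kerProj (P + adjoint P) := by
  have hortho := isOrtho_ker_add_adjoint_ker_two_sub_sub_adjoint hP
  have hsup := ker_sub_adjoint hP
  refine ⟨hsup ▸ le_sup_left, by rw [hsup, hortho.sup_inf_orthogonal], ?_⟩
  simp only [kerProj_eq_starProjection]
  rw [eq_sub_iff_add_eq']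
  exact (hortho.starProjection_eq_add hsup.symm).symm
end
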